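/- arXiv:2512.05782 — 4 statements merged into one kernel-verified Lean document; each statement's English description precedes it below -/
import Mathlib

section
/- For every t ∈ ℂ, the matrix M := I₄ + L, where L = [[0,0,0,0],[0,−1,1,0],[0,t,−t,0],[0,0,0,0]] is the generator of the asymmetric simple exclusion process on two lattice sites (right jump rate 1, left jump rate t), satisfies the braided Yang–Baxter equation M₁₂ M₂₃ M₁₂ = M₂₃ M₁₂ M₂₃. -/
/- STATEMENT 0: The matrix M = I₄ + L, where L is the two-site ASEP generator with
right rate 1 and left rate t, satisfies the braided Yang–Baxter equation
M₁₂ M₂₃ M₁₂ = M₂₃ M₁₂ M₂₃.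

We identify ℂ⁴ ≅ ℂ² ⊗ ℂ² via the ordered basis (e₁⊗e₁, e₁⊗e₂, e₂⊗e₁, e₂⊗e₂),
i.e. via the index encoding (i,j) ↦ 2i+j, and realize the Kronecker products
M ⊗ I₂ and I₂ ⊗ M as matrices indexed by Fin 2 × Fin 2 × Fin 2. -/

open Matrix
set_option maxHeartbeats 1000000

noncomputable section

/-- Encoding of the ordered tensor basis (e₁⊗e₁, e₁⊗e₂, e₂⊗e₁, e₂⊗e₂). -/
def enc2 (x : Fin 2 × Fin 2) : Fin 4 := ⟨2 * x.1.val + x.2.val, by omega⟩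

/-- View a 4×4 matrix as an operator on ℂ² ⊗ ℂ². -/
def toProd (M : Matrix (Fin 4) (Fin 4) ℂ) : Matrix (Fin 2 × Fin 2) (Fin 2 × Fin 2) ℂ :=
  fun x y => M (enc2 x) (enc2 y)

/-- M₁₂ = M ⊗ I₂, acting on the first two tensor factors. -/
def M12 (M : Matrix (Fin 2 × Fin 2) (Fin 2 × Fin 2) ℂ) :
    Matrix (Fin 2 × Fin 2 × Fin 2) (Fin 2 × Fin 2 × Fin 2) ℂ :=
  fun x y => M (x.1, x.2.1) (y.1, y.2.1) * (if x.2.2 = y.2.2 then 1 else 0)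

/-- M₂₃ = I₂ ⊗ M, acting on the last two tensor factors. -/
def M23 (M : Matrix (Fin 2 × Fin 2) (Fin 2 × Fin 2) ℂ) :
    Matrix (Fin 2 × Fin 2 × Fin 2) (Fin 2 × Fin 2 × Fin 2) ℂ :=
  fun x y => (if x.1 = y.1 then 1 else 0) * M (x.2.1, x.2.2) (y.2.1, y.2.2)

theorem asep_generator_braided_YBE (t : ℂ) :
    let L : Matrix (Fin 2 × Fin 2) (Fin 2 × Fin 2) ℂ :=
      toProd !![0, 0, 0, 0; 0, -1, 1, 0; 0, t, -t, 0; 0, 0, 0, 0]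
    let M := 1 + L
    M12 M * M23 M * M12 M = M23 M * M12 M * M23 M := by
  intro L M
  have hM : ∀ x y : Fin 2 × Fin 2, M x y =
      !![1, 0, 0, 0; 0, 0, 1, 0; 0, t, 1 - t, 0; 0, 0, 0, 1] (enc2 x) (enc2 y) := by
    intro x y
    simp only [M, L, toProd, Matrix.add_apply, Matrix.one_apply]
    fin_cases x <;> fin_cases y <;>
      simp [enc2, Matrix.vecHead, Matrix.vecTail, Prod.ext_iff] <;>
      first | ring | decide
  ext ⟨a,b,c⟩ ⟨d,e,f⟩
  simp only [Matrix.mul_apply, M12, M23, Fintype.sum_prod_type, Fin.sum_univ_two, hM]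
  fin_cases a <;> fin_cases b <;> fin_cases c <;> fin_cases d <;> fin_cases e <;> fin_cases f <;>
    · simp only [enc2]
      norm_num [Matrix.cons_val_zero, Matrix.cons_val_one, Matrix.head_cons,
        Matrix.cons_val', Matrix.empty_val', Matrix.cons_val_fin_one]
      try ring
end
end

section
/- For every β ∈ ℂ, the stochastic matrix R_{1,β} (fixing e₁⊗e₁ and e₂⊗e₂, sending e₁⊗e₂ to e₂⊗e₁, and sending e₂⊗e₁ to β e₁⊗e₂ + (1−β) e₂⊗e₁) satisfies the braided Yang–Baxter equation (R_{1,β})₁₂ (R_{1,β})₂₃ (R_{1,β})₁₂ = (R_{1,β})₂₃ (R_{1,β})₁₂ (R_{1,β})₂₃. -/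
open Matrix

noncomputable section

/-- The matrix R_{α,β}: fixes e₁⊗e₁ and e₂⊗e₂, sends e₁⊗e₂ to (1−α)e₁⊗e₂ + α e₂⊗e₁
and e₂⊗e₁ to β e₁⊗e₂ + (1−β) e₂⊗e₁. -/
def Rab (α β : ℂ) : Matrix (Fin 2 × Fin 2) (Fin 2 × Fin 2) ℂ :=
  toProd !![1, 0, 0, 0; 0, 1 - α, β, 0; 0, α, 1 - β, 0; 0, 0, 0, 1]

def Rfun (β : ℂ) : Matrix (Fin 2 × Fin 2) (Fin 2 × Fin 2) ℂ :=
  fun x y => match x.1.val, x.2.val, y.1.val, y.2.val with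
  | 0,0,0,0 => 1
  | 1,0,0,1 => 1
  | 0,1,1,0 => β
  | 1,0,1,0 => 1-β
  | 1,1,1,1 => 1
  | _,_,_,_ => 0

lemma Rab_eq (β : ℂ) : Rab 1 β = Rfun β := by
  ext ⟨a,b⟩ ⟨c,d⟩
  fin_cases a <;> fin_cases b <;> fin_cases c <;> fin_cases d <;>
    simp [Rab, toProd, enc2, Rfun, vecHead, vecTail]

set_option maxHeartbeats 1000000 in
theorem R_one_beta_braided_YBE (β : ℂ) :
    M12 (Rab 1 β) * M23 (Rab 1 β) * M12 (Rab 1 β) =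
      M23 (Rab 1 β) * M12 (Rab 1 β) * M23 (Rab 1 β) := by
  rw [Rab_eq]
  ext ⟨a,b,c⟩ ⟨d,e,f⟩
  simp only [M12, M23, mul_apply, Fintype.sum_prod_type, Fin.sum_univ_two]
  fin_cases a <;> fin_cases b <;> fin_cases c <;> fin_cases d <;> fin_cases e <;> fin_cases f <;>
    simp [Rfun] <;> ring

end
end

section
/- Let α, β ∈ ℂ. If R_{α,β} satisfies the braided Yang–Baxter equation (R_{α,β})₁₂ (R_{α,β})₂₃ (R_{α,β})₁₂ = (R_{α,β})₂₃ (R_{α,β})₁₂ (R_{α,β})₂₃, then α(1−α)(1−β) = 0. (This necessary condition is obtained by evaluating both sides of the braided Yang–Baxter equation on the vector e₁⊗e₁⊗e₂.) -/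
open Matrix

noncomputable section

theorem braided_YBE_necessary_condition (α β : ℂ)
    (h : M12 (Rab α β) * M23 (Rab α β) * M12 (Rab α β) =
      M23 (Rab α β) * M12 (Rab α β) * M23 (Rab α β)) :
    α * (1 - α) * (1 - β) = 0 := by
  have h1 := congrFun (congrFun h (0, 0, 1)) (0, 0, 1)
  simp [M12, M23, Rab, toProd, enc2, Matrix.mul_apply, Fin.sum_univ_two, Fintype.sum_prod_type,
    Matrix.of_apply, Matrix.cons_val', Matrix.cons_val_zero, Matrix.cons_val_one] at h1
  ring_nf at h1 ⊢
  linear_combination h1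

end
end

section
/- Let N ≥ 2 and let H be the XXX Hamiltonian interaction term H = Σ_{j=0}^{N−1} Σ_{a=1}^{3} σᵃⱼ σᵃ_{j+1 mod N} on (ℂ²)^{⊗N} with periodic boundary conditions. Then for each a ∈ {1,2,3}, the total spin operator Sᵃ := Σ_{j=0}^{N−1} σᵃⱼ commutes with H: Sᵃ H = H Sᵃ. -/
/- STATEMENT 6: For the XXX Hamiltonian interaction term
H = Σ_{j} Σ_{a=1}^{3} σᵃⱼ σᵃ_{j+1 mod N} on (ℂ²)^{⊗N} with periodic boundary
conditions, each total spin operator Sᵃ = Σ_j σᵃⱼ commutes with H.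

The standard basis of (ℂ²)^{⊗N} is indexed by functions Fin N → Fin 2, and
σᵃⱼ acts as the Pauli matrix σᵃ on the j-th tensor factor and the identity
elsewhere. Addition in Fin N is addition mod N. -/

open Matrix

noncomputable section

/-- The three Pauli matrices σ¹, σ², σ³. -/
def pauli : Fin 3 → Matrix (Fin 2) (Fin 2) ℂ :=
  ![!![0, 1; 1, 0], !![0, -Complex.I; Complex.I, 0], !![1, 0; 0, -1]]

/-- σᵃⱼ : the Pauli matrix σᵃ acting on the j-th tensor factor of (ℂ²)^{⊗N}. -/
def pauliAt (N : ℕ) (a : Fin 3) (j : Fin N) :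
    Matrix (Fin N → Fin 2) (Fin N → Fin 2) ℂ :=
  fun x y => if ∀ i, i ≠ j → x i = y i then pauli a (x j) (y j) else 0

/-- The XXX Hamiltonian interaction term with periodic boundary conditions. -/
def XXXHam (N : ℕ) [NeZero N] : Matrix (Fin N → Fin 2) (Fin N → Fin 2) ℂ :=
  ∑ j : Fin N, ∑ a : Fin 3, pauliAt N a j * pauliAt N a (j + 1)

/-! ### Auxiliary machinery -/

/-- A 2×2 matrix acting on the j-th tensor factor. -/
def matAt (N : ℕ) (M : Matrix (Fin 2) (Fin 2) ℂ) (j : Fin N) :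
    Matrix (Fin N → Fin 2) (Fin N → Fin 2) ℂ :=
  fun x y => if ∀ i, i ≠ j → x i = y i then M (x j) (y j) else 0

lemma pauliAt_eq_matAt (N : ℕ) (a : Fin 3) (j : Fin N) :
    pauliAt N a j = matAt N (pauli a) j := rfl

lemma sum_update (N : ℕ) (x : Fin N → Fin 2) (j : Fin N)
    (f : (Fin N → Fin 2) → ℂ)
    (hf : ∀ z, ¬ (∀ i, i ≠ j → z i = x i) → f z = 0) :
    ∑ z, f z = ∑ t : Fin 2, f (Function.update x j t) := by
  classical
  rw [← Finset.sum_subset (Finset.subset_univ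
      (Finset.univ.image fun t : Fin 2 => Function.update x j t)) ?_,
    Finset.sum_image ?_]
  · intro t₁ _ t₂ _ h
    have := congrFun h j
    simpa using this
  · intro z _ hz
    apply hf
    intro h
    apply hz
    simp only [Finset.mem_image, Finset.mem_univ, true_and]
    exact ⟨z j, funext fun i => by
      by_cases hi : i = j
      · subst hi; simp
      · simp [Function.update_of_ne hi, h i hi]⟩

lemma matAt_mul_same (N : ℕ) (M M' : Matrix (Fin 2) (Fin 2) ℂ) (j : Fin N) :
    matAt N M j * matAt N M' j = matAt N (M * M') j := by
  classical
  ext x y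
  rw [Matrix.mul_apply]
  rw [sum_update N x j _ (fun z hz => by
    simp only [matAt]
    rw [if_neg, zero_mul]
    intro h; exact hz fun i hi => (h i hi).symm)]
  by_cases h : ∀ i, i ≠ j → x i = y i
  · have h1 : ∀ t : Fin 2, (∀ i, i ≠ j → x i = Function.update x j t i) := by
      intro t i hi; simp [Function.update_of_ne hi]
    have h2 : ∀ t : Fin 2, (∀ i, i ≠ j → Function.update x j t i = y i) := by
      intro t i hi; simp [Function.update_of_ne hi, h i hi]
    simp only [matAt, if_pos (h1 _), if_pos (h2 _), if_pos h, Function.update_self,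
      Matrix.mul_apply]
  · have h2 : ∀ t : Fin 2, ¬ (∀ i, i ≠ j → Function.update x j t i = y i) := by
      intro t hc
      exact h fun i hi => by rw [← hc i hi, Function.update_of_ne hi]
    simp only [matAt, if_neg (h2 _), if_neg h, mul_zero, Finset.sum_const_zero]

lemma matAt_mul_ne (N : ℕ) (M M' : Matrix (Fin 2) (Fin 2) ℂ) {j k : Fin N}
    (hjk : j ≠ k) (x y : Fin N → Fin 2) :
    (matAt N M j * matAt N M' k) x y =
      if ∀ i, i ≠ j → i ≠ k → x i = y i then M (x j) (y j) * M' (x k) (y k) else 0 := by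
  classical
  rw [Matrix.mul_apply]
  rw [sum_update N x j _ (fun z hz => by
    simp only [matAt]
    rw [if_neg, zero_mul]
    intro h; exact hz fun i hi => (h i hi).symm)]
  have h1 : ∀ t : Fin 2, (∀ i, i ≠ j → x i = Function.update x j t i) := by
    intro t i hi; simp [Function.update_of_ne hi]
  simp only [matAt, if_pos (h1 _), Function.update_self]
  by_cases h : ∀ i, i ≠ j → i ≠ k → x i = y i
  · rw [if_pos h]
    have h2 : ∀ t : Fin 2, (∀ i, i ≠ k → Function.update x j t i = y i) ↔ t = y j := by
      intro t
      constructor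
      · intro hc
        have := hc j (hjk)
        rwa [Function.update_self] at this
      · rintro rfl i hik
        by_cases hij : i = j
        · subst hij; simp
        · rw [Function.update_of_ne hij]; exact h i hij hik
    have : ∀ t : Fin 2, (if ∀ i, i ≠ k → Function.update x j t i = y i
        then M' (Function.update x j t k) (y k) else 0)
        = if t = y j then M' (x k) (y k) else 0 := by
      intro t
      rw [Function.update_of_ne (Ne.symm hjk)]
      simp [h2 t]
    simp only [this]
    simp [mul_ite, Finset.sum_ite_eq']
  · rw [if_neg h]
    have h2 : ∀ t : Fin 2, ¬ (∀ i, i ≠ k → Function.update x j t i = y i) := by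
      intro t hc
      exact h fun i hij hik => by rw [← hc i hik, Function.update_of_ne hij]
    simp only [if_neg (h2 _), mul_zero, Finset.sum_const_zero]

lemma matAt_comm (N : ℕ) (M M' : Matrix (Fin 2) (Fin 2) ℂ) {j k : Fin N} (hjk : j ≠ k) :
    matAt N M j * matAt N M' k = matAt N M' k * matAt N M j := by
  ext x y
  rw [matAt_mul_ne N M M' hjk, matAt_mul_ne N M' M hjk.symm]
  by_cases h : ∀ i, i ≠ j → i ≠ k → x i = y i
  · rw [if_pos h, if_pos (fun i h1 h2 => h i h2 h1), mul_comm]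
  · rw [if_neg h, if_neg (fun hc => h fun i h1 h2 => hc i h2 h1)]

lemma matAt_sub (N : ℕ) (M M' : Matrix (Fin 2) (Fin 2) ℂ) (j : Fin N) :
    matAt N (M - M') j = matAt N M j - matAt N M' j := by
  ext x y
  simp only [matAt, Matrix.sub_apply]
  split <;> simp

/-- The commutator of two Pauli matrices. -/
def pComm (a b : Fin 3) : Matrix (Fin 2) (Fin 2) ℂ :=
  pauli a * pauli b - pauli b * pauli a

set_option maxHeartbeats 1000000 in
lemma key2 (a : Fin 3) (p q r s : Fin 2) :
    ∑ b : Fin 3, (pComm a b p q * pauli b r s + pauli b p q * pComm a b r s) = 0 := by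
  simp only [Fin.sum_univ_three, pComm, Matrix.sub_apply, Matrix.mul_apply, Fin.sum_univ_two]
  fin_cases a <;> fin_cases p <;> fin_cases q <;> fin_cases r <;> fin_cases s <;>
    norm_num [pauli, Matrix.cons_val_zero, Matrix.cons_val_one, Matrix.head_cons] <;>
    ring_nf <;> simp [Complex.I_sq] <;> ring

theorem total_spin_commutes_with_XXX (N : ℕ) [NeZero N] (hN : 2 ≤ N) (a : Fin 3) :
    (∑ j : Fin N, pauliAt N a j) * XXXHam N = XXXHam N * (∑ j : Fin N, pauliAt N a j) := by
  classical
  have h10 : (1 : Fin N) ≠ 0 := by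
    intro h
    have h1 : ((1 : Fin N) : ℕ) = 1 % N := Fin.val_one' N
    rw [h] at h1
    simp only [Fin.val_zero] at h1
    rw [Nat.mod_eq_of_lt (by omega)] at h1
    omega
  have hj1 : ∀ j : Fin N, j ≠ j + 1 := by
    intro j h
    exact h10 (left_eq_add.mp h)
  have key : ∀ (j : Fin N) (b : Fin 3),
      (∑ k : Fin N, pauliAt N a k) * (pauliAt N b j * pauliAt N b (j + 1))
        - (pauliAt N b j * pauliAt N b (j + 1)) * (∑ k : Fin N, pauliAt N a k)
      = matAt N (pComm a b) j * matAt N (pauli b) (j + 1)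
        + matAt N (pauli b) j * matAt N (pComm a b) (j + 1) := by
    intro j b
    have hjj : j ≠ j + 1 := hj1 j
    simp only [pauliAt_eq_matAt]
    rw [Finset.sum_mul, Finset.mul_sum, ← Finset.sum_sub_distrib]
    rw [← Finset.sum_subset (Finset.subset_univ ({j, j + 1} : Finset (Fin N))) ?_,
      Finset.sum_pair hjj]
    · congr 1
      · -- k = j term
        rw [← mul_assoc, matAt_mul_same, mul_assoc,
          matAt_comm N (pauli b) (pauli a) hjj.symm, ← mul_assoc, matAt_mul_same,
          ← sub_mul, ← matAt_sub]
        rfl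
      · -- k = j + 1 term
        rw [← mul_assoc, matAt_comm N (pauli a) (pauli b) hjj.symm, mul_assoc,
          matAt_mul_same, mul_assoc, matAt_mul_same, ← mul_sub, ← matAt_sub]
        rfl
    · intro k _ hk
      simp only [Finset.mem_insert, Finset.mem_singleton, not_or] at hk
      rw [← mul_assoc, matAt_comm N (pauli a) (pauli b) hk.1, mul_assoc,
        matAt_comm N (pauli a) (pauli b) hk.2, ← mul_assoc, sub_self]
  have key3 : ∀ j : Fin N,
      ∑ b : Fin 3, (matAt N (pComm a b) j * matAt N (pauli b) (j + 1)
        + matAt N (pauli b) j * matAt N (pComm a b) (j + 1)) = 0 := by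
    intro j
    have hjj : j ≠ j + 1 := hj1 j
    ext x y
    rw [Matrix.sum_apply, Matrix.zero_apply]
    have : ∀ b : Fin 3,
        (matAt N (pComm a b) j * matAt N (pauli b) (j + 1)
          + matAt N (pauli b) j * matAt N (pComm a b) (j + 1)) x y
        = if ∀ i, i ≠ j → i ≠ j + 1 → x i = y i then
            pComm a b (x j) (y j) * pauli b (x (j+1)) (y (j+1))
            + pauli b (x j) (y j) * pComm a b (x (j+1)) (y (j+1)) else 0 := by
      intro b
      rw [Matrix.add_apply, matAt_mul_ne N _ _ hjj, matAt_mul_ne N _ _ hjj]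
      split <;> simp
    simp only [this]
    by_cases h : ∀ i, i ≠ j → i ≠ j + 1 → x i = y i
    · simp only [if_pos h]
      exact key2 a (x j) (y j) (x (j+1)) (y (j+1))
    · simp [if_neg h]
  rw [← sub_eq_zero, XXXHam]
  set S := ∑ k : Fin N, pauliAt N a k with hS
  rw [Finset.mul_sum, Finset.sum_mul, ← Finset.sum_sub_distrib]
  refine Finset.sum_eq_zero fun j _ => ?_
  rw [Finset.mul_sum, Finset.sum_mul, ← Finset.sum_sub_distrib]
  calc ∑ b : Fin 3, (S * (pauliAt N b j * pauliAt N b (j + 1))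
        - (pauliAt N b j * pauliAt N b (j + 1)) * S)
      = ∑ b : Fin 3, (matAt N (pComm a b) j * matAt N (pauli b) (j + 1)
        + matAt N (pauli b) j * matAt N (pComm a b) (j + 1)) :=
        Finset.sum_congr rfl fun b _ => by rw [hS]; exact key j b
    _ = 0 := key3 j

end
end
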